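/- (McDiarmid's bounded differences inequality) Let X₁,…,Xₙ be independent random variables with Xᵢ taking values in a set Aᵢ, and let f : ∏ Aᵢ → ℝ be measurable such that |f(x) − f(x′)| ≤ cᵢ whenever x and x′ differ only in the i-th coordinate. Then for every ε > 0, P(f(X₁,…,Xₙ) − E f > ε) ≤ exp(−2ε² / Σᵢ cᵢ²). -/

import Mathlib

/-!
Peel off the first coordinate `x₀` of the product measure and let `h(x₀)` be the integral of `f`
over the remaining coordinates. Then `f - 𝔼 f = (h(x₀) - 𝔼 h) + (f - h(x₀))`: the function `h` has
oscillation at most `c₀`, so Hoeffding's lemma makes the first term sub-Gaussian with parameter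
`c₀² / 4`, while for each fixed `x₀` the second term is sub-Gaussian with parameter
`∑_{i > 0} cᵢ² / 4` by induction, and Fubini multiplies the two mgf bounds. Independence makes the
law of `(X₁, …, Xₙ)` the product of the marginals, and the Chernoff bound for a sub-Gaussian
variable with parameter `∑ cᵢ² / 4` is `exp (-2 ε² / ∑ cᵢ²)`.
-/

open MeasureTheory ProbabilityTheory Real
open scoped NNReal

universe u

def HasBoundedDifferences {ι : Type*} {A : ι → Type*} (f : (∀ i, A i) → ℝ) (c : ι → ℝ) : Prop :=
  ∀ (x x' : ∀ i, A i) (i : ι), (∀ j, j ≠ i → x j = x' j) → |f x - f x'| ≤ c i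

namespace HasBoundedDifferences

theorem abs_sub_le_sum {ι : Type*} [Fintype ι] {A : ι → Type*} {f : (∀ i, A i) → ℝ}
    {c : ι → ℝ} (hf : HasBoundedDifferences f c) (x y : ∀ i, A i) :
    |f x - f y| ≤ ∑ i, c i := by
  classical
  suffices H : ∀ s : Finset ι, ∀ x y : ∀ i, A i, (∀ j ∉ s, x j = y j) →
      |f x - f y| ≤ ∑ i ∈ s, c i from H Finset.univ x y fun j hj => absurd (Finset.mem_univ j) hj
  intro s
  induction s using Finset.induction_on with
  | empty =>
    intro x y hxy
    simp [funext fun j => hxy j (Finset.notMem_empty j)]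
  | @insert a s ha ih =>
    intro x y hxy
    have h₁ : |f x - f (Function.update x a (y a))| ≤ c a :=
      hf _ _ a fun j hj => (Function.update_of_ne hj _ _).symm
    have h₂ : |f (Function.update x a (y a)) - f y| ≤ ∑ i ∈ s, c i := by
      refine ih _ y fun j hj => ?_
      rcases eq_or_ne j a with rfl | hja
      · exact Function.update_self ..
      · rw [Function.update_of_ne hja]
        exact hxy j (by simp [hja, hj])
    rw [Finset.sum_insert ha]
    exact (abs_sub_le _ _ _).trans (add_le_add h₁ h₂)

variable {n : ℕ} {A : Fin (n + 1) → Type*} {f : (∀ i, A i) → ℝ} {c : Fin (n + 1) → ℝ}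

theorem insertNth (hf : HasBoundedDifferences f c) (i : Fin (n + 1)) (a : A i) :
    HasBoundedDifferences (fun y => f (i.insertNth a y)) (fun j => c (i.succAbove j)) := by
  intro y y' k hyy
  refine hf _ _ _ fun j hj => ?_
  obtain rfl | ⟨m, rfl⟩ := i.eq_self_or_eq_succAbove j
  · simp
  · simp only [Fin.insertNth_apply_succAbove]
    exact hyy m fun hmk => hj (hmk ▸ rfl)

theorem abs_sub_insertNth_le (hf : HasBoundedDifferences f c) (i : Fin (n + 1)) (a b : A i)
    (y : ∀ j, A (i.succAbove j)) :
    |f (i.insertNth a y) - f (i.insertNth b y)| ≤ c i := by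
  refine hf _ _ _ fun j hj => ?_
  obtain rfl | ⟨m, rfl⟩ := i.eq_self_or_eq_succAbove j
  · exact absurd rfl hj
  · simp

end HasBoundedDifferences

theorem exists_forall_mem_Icc_of_abs_sub_le {α : Type*} [Nonempty α] {g : α → ℝ} {c : ℝ}
    (hg : ∀ x y, |g x - g y| ≤ c) : ∃ a, ∀ x, g x ∈ Set.Icc a (a + c) := by
  obtain ⟨x₀⟩ := ‹Nonempty α›
  have hbdd : BddBelow (Set.range g) :=
    ⟨g x₀ - c, by rintro _ ⟨x, rfl⟩; linarith [(abs_le.1 (hg x₀ x)).2]⟩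
  refine ⟨⨅ x, g x, fun x => ⟨ciInf_le hbdd x, ?_⟩⟩
  have : g x - c ≤ ⨅ y, g y := le_ciInf fun y => by linarith [(abs_le.1 (hg x y)).2]
  linarith

theorem abs_integral_sub_integral_le {α : Type*} [MeasurableSpace α] {μ : Measure α}
    [IsProbabilityMeasure μ] {F G : α → ℝ} (hF : Integrable F μ) (hG : Integrable G μ) {C : ℝ}
    (h : ∀ x, |F x - G x| ≤ C) : |∫ x, F x ∂μ - ∫ x, G x ∂μ| ≤ C := by
  rw [← integral_sub hF hG]
  simpa using norm_integral_le_of_norm_le_const (μ := μ) (f := fun x => F x - G x) (ae_of_all _ h)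

theorem hasSubgaussianMGF_sub_integral_of_abs_sub_le {α : Type*} [MeasurableSpace α]
    {μ : Measure α} [IsProbabilityMeasure μ] {g : α → ℝ} (hg : Measurable g) {c : ℝ}
    (hosc : ∀ x y, |g x - g y| ≤ c) :
    HasSubgaussianMGF (fun x => g x - ∫ x', g x' ∂μ) ((‖c‖₊ / 2) ^ 2) μ := by
  have := nonempty_of_isProbabilityMeasure μ
  obtain ⟨a, ha⟩ := exists_forall_mem_Icc_of_abs_sub_le hosc
  simpa using hasSubgaussianMGF_of_mem_Icc hg.aemeasurable (ae_of_all μ ha)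

theorem hasSubgaussianMGF_sub_integral_prod {α β : Type*} [MeasurableSpace α]
    [MeasurableSpace β] {μ : Measure α} {ν : Measure β} [IsProbabilityMeasure μ]
    [IsProbabilityMeasure ν] {g : α × β → ℝ} (hg : Measurable g) {a b : ℝ}
    (hgab : ∀ z, g z ∈ Set.Icc a b) {cμ cν : ℝ≥0}
    (hmarg : HasSubgaussianMGF (fun x => ∫ y, g (x, y) ∂ν - ∫ x', ∫ y, g (x', y) ∂ν ∂μ) cμ μ)
    (hfib : ∀ x, HasSubgaussianMGF (fun y => g (x, y) - ∫ y', g (x, y') ∂ν) cν ν) :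
    HasSubgaussianMGF (fun z => g z - ∫ z', g z' ∂μ.prod ν) (cμ + cν) (μ.prod ν) := by
  set h : α → ℝ := fun x => ∫ y, g (x, y) ∂ν
  have hE : ∫ z, g z ∂μ.prod ν = ∫ x, h x ∂μ :=
    integral_prod g (Integrable.of_mem_Icc a b hg.aemeasurable (ae_of_all _ hgab))
  have hint (t : ℝ) : Integrable (fun z => exp (t * (g z - ∫ z', g z' ∂μ.prod ν))) (μ.prod ν) :=
    integrable_exp_mul_of_mem_Icc (a := a - ∫ z', g z' ∂μ.prod ν) (b := b - ∫ z', g z' ∂μ.prod ν)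
      (hg.sub_const _).aemeasurable
      (ae_of_all _ fun z => Set.sub_mem_Icc_iff_left.2 (by simpa using hgab z))
  refine ⟨hint, fun t => ?_⟩
  have hsplit : mgf (fun z => g z - ∫ z', g z' ∂μ.prod ν) (μ.prod ν) t
      = ∫ x, mgf (fun y => g (x, y) - h x) ν t * exp (t * (h x - ∫ x', h x' ∂μ)) ∂μ := by
    simp only [mgf]
    rw [integral_prod _ (hint t)]
    congr 1 with x
    rw [← integral_mul_const]
    congr 1 with y
    rw [← exp_add, hE]
    ring_nf
  calc _ = ∫ x, mgf (fun y => g (x, y) - h x) ν t * exp (t * (h x - ∫ x', h x' ∂μ)) ∂μ := hsplit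
    _ ≤ ∫ x, exp (cν * t ^ 2 / 2) * exp (t * (h x - ∫ x', h x' ∂μ)) ∂μ := by
        refine integral_mono_of_nonneg (ae_of_all _ fun x => mul_nonneg mgf_nonneg (exp_pos _).le)
          ((hmarg.integrable_exp_mul t).const_mul _)
          (ae_of_all _ fun x => mul_le_mul_of_nonneg_right ((hfib x).mgf_le t) (exp_pos _).le)
    _ = exp (cν * t ^ 2 / 2) * mgf (fun x => h x - ∫ x', h x' ∂μ) μ t := integral_const_mul _ _
    _ ≤ exp (cν * t ^ 2 / 2) * exp (cμ * t ^ 2 / 2) :=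
        mul_le_mul_of_nonneg_left (hmarg.mgf_le t) (exp_pos _).le
    _ = exp (↑(cμ + cν) * t ^ 2 / 2) := by rw [← exp_add, NNReal.coe_add]; ring_nf

theorem hasSubgaussianMGF_pi_of_hasBoundedDifferences {n : ℕ} {A : Fin n → Type u}
    [∀ i, MeasurableSpace (A i)] (ν : ∀ i, Measure (A i)) [∀ i, IsProbabilityMeasure (ν i)]
    {f : (∀ i, A i) → ℝ} (hf : Measurable f) {c : Fin n → ℝ} (hbd : HasBoundedDifferences f c) :
    HasSubgaussianMGF (fun x => f x - ∫ y, f y ∂Measure.pi ν) (∑ i, (‖c i‖₊ / 2) ^ 2)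
      (Measure.pi ν) := by
  induction n with
  | zero =>
    have hconst (x : ∀ i, A i) : f x - ∫ y, f y ∂Measure.pi ν = 0 := by
      rw [integral_eq_const (c := f x) (ae_of_all _ fun y => congrArg f (Subsingleton.elim y x)),
        sub_self]
    simp [hconst]
  | succ n ih =>
    let e := MeasurableEquiv.piFinSuccAbove A 0
    have he : MeasurePreserving e (Measure.pi ν) _ := measurePreserving_piFinSuccAbove ν 0
    let ν' := Measure.pi fun j => ν (Fin.succAbove 0 j)
    let g : A 0 × (∀ j, A (Fin.succAbove 0 j)) → ℝ := fun z => f (e.symm z)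
    have hg : Measurable g := hf.comp e.symm.measurable
    have := nonempty_of_isProbabilityMeasure (Measure.pi ν)
    obtain ⟨a, ha⟩ := exists_forall_mem_Icc_of_abs_sub_le hbd.abs_sub_le_sum
    have hfib (x : A 0) :
        HasSubgaussianMGF (fun y => g (x, y) - ∫ y', g (x, y') ∂ν')
          (∑ j, (‖c (Fin.succAbove 0 j)‖₊ / 2) ^ 2) ν' :=
      ih _ (hf.comp (by fun_prop)) (hbd.insertNth 0 x)
    have hmarg : HasSubgaussianMGF (fun x => ∫ y, g (x, y) ∂ν' - ∫ x', ∫ y, g (x', y) ∂ν' ∂ν 0)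
        ((‖c 0‖₊ / 2) ^ 2) (ν 0) := by
      refine hasSubgaussianMGF_sub_integral_of_abs_sub_le
        (hg.stronglyMeasurable.integral_prod_right').measurable fun x x' => ?_
      have hint (x : A 0) : Integrable (fun y => g (x, y)) ν' :=
        .of_mem_Icc _ _ (hg.comp measurable_prodMk_left).aemeasurable (ae_of_all _ fun y => ha _)
      exact abs_integral_sub_integral_le (hint x) (hint x') (hbd.abs_sub_insertNth_le 0 x x')
    have key := hasSubgaussianMGF_sub_integral_prod hg (fun z => ha _) hmarg hfib
    rw [← he.map_eq] at key
    have hmean : ∫ z, g z ∂(Measure.pi ν).map e = ∫ x, f x ∂Measure.pi ν := by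
      rw [he.map_eq, ← he.integral_comp']
      simp only [g, e.symm_apply_apply]
    convert key.of_map he.measurable.aemeasurable using 1
    · ext x
      simp only [Function.comp_apply, hmean, g, e.symm_apply_apply]
    · rw [Fin.sum_univ_succAbove _ 0]

/-- McDiarmid's bounded differences inequality: if X₁,…,Xₙ are independent and
f satisfies the bounded differences condition with constants cᵢ, then
P(f(X) − E f(X) > ε) ≤ exp(−2ε² / Σ cᵢ²). -/
theorem stmt_5 {Ω : Type*} [MeasurableSpace Ω] (μ : Measure Ω)
    [IsProbabilityMeasure μ] {n : ℕ} {A : Fin n → Type*}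
    (mA : ∀ i, MeasurableSpace (A i))
    (X : ∀ i, Ω → A i) (hXm : ∀ i, Measurable (X i))
    (hindep : iIndepFun (m := mA) X μ)
    (f : (∀ i, A i) → ℝ) (hf : Measurable f)
    (c : Fin n → ℝ)
    (hbd : ∀ (x x' : ∀ i, A i) (i : Fin n),
      (∀ j, j ≠ i → x j = x' j) → |f x - f x'| ≤ c i)
    (ε : ℝ) (hε : 0 < ε) :
    (μ {ω | f (fun i => X i ω) - ∫ ω', f (fun i => X i ω') ∂μ > ε}).toReal
      ≤ exp (-2 * ε ^ 2 / ∑ i, (c i) ^ 2) := by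
  have hXvec : Measurable fun ω i => X i ω := measurable_pi_lambda _ hXm
  have (i : Fin n) : IsProbabilityMeasure (μ.map (X i)) :=
    Measure.isProbabilityMeasure_map (hXm i).aemeasurable
  have hpi := hasSubgaussianMGF_pi_of_hasBoundedDifferences (fun i => μ.map (X i)) hf hbd
  rw [← hindep.map_fun_eq_pi_map fun i => (hXm i).aemeasurable] at hpi
  have hμ := hpi.of_map hXvec.aemeasurable
  rw [integral_map hXvec.aemeasurable hf.aestronglyMeasurable] at hμ
  have hparam : 2 * ((∑ i, (‖c i‖₊ / 2) ^ 2 : ℝ≥0) : ℝ) = (∑ i, c i ^ 2) / 2 := by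
    push_cast
    simp only [Real.norm_eq_abs, div_pow, sq_abs, ← Finset.sum_div]
    ring
  calc (μ {ω | f (fun i => X i ω) - ∫ ω', f (fun i => X i ω') ∂μ > ε}).toReal
      ≤ μ.real {ω | ε ≤ f (fun i => X i ω) - ∫ ω', f (fun i => X i ω') ∂μ} :=
        measureReal_mono (Set.ofPred_subset_ofPred.2 fun _ => le_of_lt)
    _ ≤ exp (-ε ^ 2 / (2 * ((∑ i, (‖c i‖₊ / 2) ^ 2 : ℝ≥0) : ℝ))) := hμ.measure_ge_le hε.le
    _ = exp (-2 * ε ^ 2 / ∑ i, (c i) ^ 2) := by rw [hparam, div_div_eq_mul_div]; ring_nf
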